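/- arXiv:1703.03965 — 3 statements merged into one kernel-verified Lean document; each statement's English description precedes it below -/
import Mathlib

section
/- If p/α > 8 with α ∈ (0,1) and a = Φ^{-1}(1 − α/(2p)), then log(p/α) < a² < 2 log(2p/α). -/
/-!
Write `Q u = 1 - Φ u = ∫_u^∞ φ`. Both Gaussian tail bounds come from exact antiderivatives on
`(u, ∞)`: `t φ t = (-φ t)'` gives `Q u ≤ φ u / u`, and `(1 + t⁻²) φ t = (-φ t / t)'` gives
`u φ u / (1 + u²) ≤ Q u`. The equation for `a` says `Q a = α / (2p) < 1/16`, while the lower bound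
at `√2` gives `Q √2 ≥ 1 / (3 e √π) > 1/16`; hence `a ≥ √2`. For such `a` the lower bound beats
`e^{-a²} / 2` (since `e^{a²/2} ≥ e a² / 2` and `3 √π < 2 e`) and the upper bound is below
`e^{-a²/2}`; taking logarithms gives the two inequalities.
-/

noncomputable def stdNormalPDF (u : ℝ) : ℝ := Real.exp (-u ^ 2 / 2) / Real.sqrt (2 * Real.pi)

noncomputable def stdNormalCDF (u : ℝ) : ℝ := ∫ t in Set.Iic u, stdNormalPDF t

open MeasureTheory Real Set Filter Topology

lemma stdNormalPDF_pos (u : ℝ) : 0 < stdNormalPDF u := by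
  unfold stdNormalPDF
  positivity

lemma stdNormalPDF_eq_exp_neg_mul_sq (u : ℝ) :
    stdNormalPDF u = exp (-(1 / 2) * u ^ 2) / √(2 * π) := by
  unfold stdNormalPDF
  ring_nf

lemma integrable_stdNormalPDF : Integrable stdNormalPDF := by
  simpa only [← stdNormalPDF_eq_exp_neg_mul_sq] using
    (integrable_exp_neg_mul_sq (by norm_num : (0 : ℝ) < 1 / 2)).div_const (√(2 * π))

lemma integral_stdNormalPDF : ∫ u, stdNormalPDF u = 1 := by
  simp only [stdNormalPDF_eq_exp_neg_mul_sq]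
  rw [integral_div, integral_gaussian, div_eq_one_iff_eq (by positivity)]
  ring_nf

lemma one_sub_stdNormalCDF (u : ℝ) : 1 - stdNormalCDF u = ∫ t in Ioi u, stdNormalPDF t := by
  rw [← integral_stdNormalPDF, stdNormalCDF, ← intervalIntegral.integral_Iic_add_Ioi
    integrable_stdNormalPDF.integrableOn integrable_stdNormalPDF.integrableOn, add_sub_cancel_left]

lemma stdNormalCDF_mono : Monotone stdNormalCDF := fun _ _ huv =>
  setIntegral_mono_set integrable_stdNormalPDF.integrableOn
    (.of_forall fun t => (stdNormalPDF_pos t).le) (Iic_subset_Iic.mpr huv).eventuallyLE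

lemma hasDerivAt_stdNormalPDF (x : ℝ) : HasDerivAt stdNormalPDF (-x * stdNormalPDF x) x := by
  rw [show stdNormalPDF = fun u => exp (-(1 / 2) * u ^ 2) / √(2 * π) from
    funext stdNormalPDF_eq_exp_neg_mul_sq]
  refine (((hasDerivAt_pow 2 x).const_mul (-(1 / 2))).exp.div_const (√(2 * π))).congr_deriv ?_
  beta_reduce
  push_cast
  ring

lemma tendsto_stdNormalPDF_atTop : Tendsto stdNormalPDF atTop (𝓝 0) := by
  have h : Tendsto (fun u : ℝ => -u ^ 2 / 2) atTop atBot :=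
    tendsto_neg_atTop_atBot.comp ((tendsto_pow_atTop two_ne_zero).atTop_div_const two_pos)
      |>.congr fun u => by simp [neg_div]
  rw [← zero_div (√(2 * π))]
  exact (tendsto_exp_atBot.comp h).div_const _

lemma one_sub_stdNormalCDF_le {u : ℝ} (hu : 0 < u) :
    1 - stdNormalCDF u ≤ stdNormalPDF u / u := by
  have hderiv : ∀ x ∈ Ici u, HasDerivAt (fun t => -stdNormalPDF t) (x * stdNormalPDF x) x :=
    fun x _ => by simpa using (hasDerivAt_stdNormalPDF x).fun_neg
  have hnonneg : ∀ x ∈ Ioi u, 0 ≤ x * stdNormalPDF x :=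
    fun x hx => mul_nonneg (hu.trans hx).le (stdNormalPDF_pos x).le
  have hlim : Tendsto (fun t => -stdNormalPDF t) atTop (𝓝 0) := by
    simpa using tendsto_stdNormalPDF_atTop.neg
  rw [one_sub_stdNormalCDF]
  calc ∫ t in Ioi u, stdNormalPDF t
      ≤ ∫ t in Ioi u, t * stdNormalPDF t / u := by
        refine setIntegral_mono_on integrable_stdNormalPDF.integrableOn
          ((integrableOn_Ioi_deriv_of_nonneg' hderiv hnonneg hlim).div_const u)
          measurableSet_Ioi fun t ht => ?_
        rw [le_div_iff₀ hu, mul_comm]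
        exact mul_le_mul_of_nonneg_right (le_of_lt ht) (stdNormalPDF_pos t).le
    _ = stdNormalPDF u / u := by
        rw [integral_div, integral_Ioi_of_hasDerivAt_of_nonneg' hderiv hnonneg hlim]
        ring

lemma mul_stdNormalPDF_le_one_sub_stdNormalCDF {u : ℝ} (hu : 0 < u) :
    u / (1 + u ^ 2) * stdNormalPDF u ≤ 1 - stdNormalCDF u := by
  have hderiv : ∀ x ∈ Ici u, HasDerivAt (fun t => -(stdNormalPDF t / t))
      ((1 + (x ^ 2)⁻¹) * stdNormalPDF x) x := fun x hx => by
    have hx : x ≠ 0 := (hu.trans_le hx).ne'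
    refine ((hasDerivAt_stdNormalPDF x).fun_div (hasDerivAt_id' x) hx).fun_neg.congr_deriv ?_
    field_simp
    ring
  have hnonneg : ∀ x ∈ Ioi u, 0 ≤ (1 + (x ^ 2)⁻¹) * stdNormalPDF x :=
    fun x _ => by have := stdNormalPDF_pos x; positivity
  have hlim : Tendsto (fun t => -(stdNormalPDF t / t)) atTop (𝓝 0) := by
    simpa [div_eq_mul_inv] using (tendsto_stdNormalPDF_atTop.mul tendsto_inv_atTop_zero).neg
  have hu2 : 0 < 1 + (u ^ 2)⁻¹ := by positivity
  have key : stdNormalPDF u / u ≤ (1 + (u ^ 2)⁻¹) * (1 - stdNormalCDF u) := by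
    rw [one_sub_stdNormalCDF, ← integral_const_mul]
    calc stdNormalPDF u / u = ∫ t in Ioi u, (1 + (t ^ 2)⁻¹) * stdNormalPDF t := by
          rw [integral_Ioi_of_hasDerivAt_of_nonneg' hderiv hnonneg hlim]
          ring
      _ ≤ ∫ t in Ioi u, (1 + (u ^ 2)⁻¹) * stdNormalPDF t := by
        refine setIntegral_mono_on (integrableOn_Ioi_deriv_of_nonneg' hderiv hnonneg hlim)
          (integrable_stdNormalPDF.integrableOn.const_mul _) measurableSet_Ioi fun t ht => ?_
        have ht : u < t := ht
        gcongr
        exact (stdNormalPDF_pos t).le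
  rw [← div_le_iff₀' hu2] at key
  refine (le_of_eq ?_).trans key
  field_simp
  ring

lemma three_mul_sqrt_pi_lt_two_mul_exp_one : 3 * √π < 2 * exp 1 := by
  have he := exp_one_gt_d9
  have hsqrt : √π < 2 * exp 1 / 3 := (sqrt_lt' (by positivity)).mpr (by nlinarith [pi_lt_d2])
  linarith

lemma one_div_sixteen_lt_one_sub_stdNormalCDF_sqrt_two : 1 / 16 < 1 - stdNormalCDF √2 := by
  refine lt_of_lt_of_le ?_ (mul_stdNormalPDF_le_one_sub_stdNormalCDF (by positivity))
  have hpdf : stdNormalPDF √2 = (exp 1)⁻¹ / (√2 * √π) := by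
    rw [stdNormalPDF, sq_sqrt zero_le_two, sqrt_mul zero_le_two, ← exp_neg]
    norm_num
  rw [hpdf, sq_sqrt zero_le_two]
  have := three_mul_sqrt_pi_lt_two_mul_exp_one
  have he := exp_one_lt_d9
  have : 0 < √π := by positivity
  field_simp
  nlinarith

lemma one_sub_stdNormalCDF_lt_exp {u : ℝ} (hu : 1 ≤ u) :
    1 - stdNormalCDF u < exp (-u ^ 2 / 2) := by
  have hu0 : 0 < u := by linarith
  have hs : 1 < √(2 * π) := by rw [lt_sqrt zero_le_one]; nlinarith [pi_gt_three]
  calc 1 - stdNormalCDF u ≤ stdNormalPDF u / u := one_sub_stdNormalCDF_le hu0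
    _ = exp (-u ^ 2 / 2) / (√(2 * π) * u) := by rw [stdNormalPDF, div_div]
    _ < exp (-u ^ 2 / 2) := div_lt_self (exp_pos _) (by nlinarith)

lemma sqrt_two_pi_mul_one_add_sq_lt {u : ℝ} (hu : √2 ≤ u) :
    √(2 * π) * (1 + u ^ 2) < 2 * u * exp (u ^ 2 / 2) := by
  have hs2 : 0 < √2 := by positivity
  have hsπ : 0 < √π := by positivity
  have hu2 : 2 ≤ u ^ 2 := by nlinarith [sq_sqrt zero_le_two]
  have hπ := three_mul_sqrt_pi_lt_two_mul_exp_one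
  rw [sqrt_mul zero_le_two]
  calc √2 * √π * (1 + u ^ 2) ≤ √2 * (3 * √π) * (u ^ 2 / 2) := by
        nlinarith [mul_pos hs2 hsπ]
    _ < √2 * (2 * exp 1) * (u ^ 2 / 2) := by gcongr
    _ ≤ u * (2 * exp 1) * (u ^ 2 / 2) := by gcongr
    _ ≤ 2 * u * exp (u ^ 2 / 2) := by nlinarith [exp_one_mul_le_exp (x := u ^ 2 / 2)]

lemma exp_neg_sq_lt_two_mul_one_sub_stdNormalCDF {u : ℝ} (hu : √2 ≤ u) :
    exp (-u ^ 2) < 2 * (1 - stdNormalCDF u) := by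
  have hu0 : 0 < u := (sqrt_pos.2 two_pos).trans_le hu
  have hgrowth : exp (-u ^ 2 / 2) < 2 * u / (√(2 * π) * (1 + u ^ 2)) := by
    rw [lt_div_iff₀ (by positivity), neg_div, exp_neg, inv_mul_lt_iff₀ (exp_pos _)]
    linarith [sqrt_two_pi_mul_one_add_sq_lt hu]
  calc exp (-u ^ 2) = exp (-u ^ 2 / 2) * exp (-u ^ 2 / 2) := by rw [← exp_add]; ring_nf
    _ < exp (-u ^ 2 / 2) * (2 * u / (√(2 * π) * (1 + u ^ 2))) := by gcongr
    _ = 2 * (u / (1 + u ^ 2) * stdNormalPDF u) := by rw [stdNormalPDF]; field_simp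
    _ ≤ 2 * (1 - stdNormalCDF u) := by gcongr; exact mul_stdNormalPDF_le_one_sub_stdNormalCDF hu0

theorem inv_cdf_square_bounds_general (p α a : ℝ)
    (hpα : 8 < p / α) (ha : stdNormalCDF a = 1 - α / (2 * p)) :
    Real.log (p / α) < a ^ 2 ∧ a ^ 2 < 2 * Real.log (2 * p / α) := by
  have hα : α ≠ 0 := by rintro rfl; norm_num at hpα
  have hp : p ≠ 0 := by rintro rfl; norm_num at hpα
  have htail : 1 - stdNormalCDF a = (2 * (p / α))⁻¹ := by rw [ha]; field_simp; ring
  rw [mul_div_assoc]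
  set r := p / α
  have hr : 0 < r := by linarith
  have ha2 : √2 ≤ a := by
    by_contra! h
    have hsmall : (2 * r)⁻¹ < 1 / 16 := by
      rw [inv_lt_comm₀ (by linarith) (by norm_num)]
      linarith
    linarith [stdNormalCDF_mono h.le, one_div_sixteen_lt_one_sub_stdNormalCDF_sqrt_two]
  constructor
  · have h := exp_neg_sq_lt_two_mul_one_sub_stdNormalCDF ha2
    rw [htail, show 2 * (2 * r)⁻¹ = r⁻¹ by field_simp, ← lt_log_iff_exp_lt (inv_pos.2 hr),
      log_inv] at h
    linarith
  · have h := one_sub_stdNormalCDF_lt_exp (one_lt_sqrt_two.le.trans ha2)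
    rw [htail, ← log_lt_iff_lt_exp (inv_pos.2 (by linarith)), log_inv] at h
    linarith

theorem inv_cdf_square_bounds (p α a : ℝ) (hα : α ∈ Set.Ioo (0 : ℝ) 1)
    (hpα : 8 < p / α) (ha : stdNormalCDF a = 1 - α / (2 * p)) :
    Real.log (p / α) < a ^ 2 ∧ a ^ 2 < 2 * Real.log (2 * p / α) :=
  inv_cdf_square_bounds_general p α a hpα ha
end

section
/- Let f: ℝᵖ → ℝ be convex and differentiable, λ > 0, c > 1, and β*, β̂ ∈ ℝᵖ. Let T ⊆ {1,…,p} contain the support of β*. If β̂ minimizes f(β) + λ‖β‖₁ and λ ≥ c‖∇f(β*)‖_∞, then the error δ = β̂ − β* satisfies ‖δ_{T^c}‖₁ ≤ ((c+1)/(c−1))·‖δ_T‖₁. -/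
open Finset

/-!
By optimality of `βhat` and the triangle inequality on `T` (where `βstar` vanishes off `T`),
`f βhat - f βstar ≤ λ (‖δ_T‖₁ - ‖δ_{Tᶜ}‖₁)`. By convexity and the ℓ₁/ℓ∞ duality,
`f βhat - f βstar ≥ ⟨∇f(βstar), δ⟩ ≥ -(λ/c) ‖δ‖₁`. Comparing the two bounds and dividing by `λ / c`
gives `(c - 1) ‖δ_{Tᶜ}‖₁ ≤ (c + 1) ‖δ_T‖₁`.
-/

theorem ConvexOn.le_sub_of_hasFDerivAt {E : Type*} [NormedAddCommGroup E] [NormedSpace ℝ E]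
    {s : Set E} {f : E → ℝ} {f' : E →L[ℝ] ℝ} {x y : E} (hf : ConvexOn ℝ s f)
    (hx : x ∈ s) (hy : y ∈ s) (hf' : HasFDerivAt f f' x) :
    f' (y - x) ≤ f y - f x := by
  let ℓ : ℝ →ᵃ[ℝ] E := AffineMap.lineMap x y
  have hφ : ConvexOn ℝ (ℓ ⁻¹' s) (f ∘ ℓ) := hf.comp_affineMap ℓ
  have hderiv : HasDerivAt (f ∘ ℓ) (f' (y - x)) 0 := by
    have hf'0 : HasFDerivAt f f' (ℓ 0) := by simpa [ℓ] using hf'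
    exact hf'0.comp_hasDerivAt 0 AffineMap.hasDerivAt_lineMap
  simpa [slope_def_field, ℓ] using
    hφ.le_slope_of_hasDerivAt (x := 0) (y := 1) (by simpa [ℓ]) (by simpa [ℓ]) one_pos hderiv

theorem ConvexOn.inner_sub_le_of_hasGradientAt {E : Type*} [NormedAddCommGroup E]
    [InnerProductSpace ℝ E] [CompleteSpace E]
    {s : Set E} {f : E → ℝ} {g x y : E} (hf : ConvexOn ℝ s f)
    (hx : x ∈ s) (hy : y ∈ s) (hg : HasGradientAt f g x) :
    inner ℝ g (y - x) ≤ f y - f x := by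
  simpa using hf.le_sub_of_hasFDerivAt hx hy hg.hasFDerivAt

theorem sum_abs_sub_sum_abs_le_of_support_subset {ι : Type*} [Fintype ι] [DecidableEq ι]
    {x y : ι → ℝ} {T : Finset ι} (hx : ∀ j ∉ T, x j = 0) :
    ∑ j, |x j| - ∑ j, |y j| ≤ ∑ j ∈ T, |y j - x j| - ∑ j ∈ Tᶜ, |y j - x j| := by
  have hxTc : ∑ j ∈ Tᶜ, |x j| = 0 :=
    sum_eq_zero fun j hj => by rw [hx j (mem_compl.1 hj), abs_zero]
  have hyTc : ∑ j ∈ Tᶜ, |y j - x j| = ∑ j ∈ Tᶜ, |y j| :=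
    sum_congr rfl fun j hj => by rw [hx j (mem_compl.1 hj), sub_zero]
  rw [← sum_add_sum_compl T (fun j => |x j|), ← sum_add_sum_compl T (fun j => |y j|), hxTc, hyTc]
  have : ∑ j ∈ T, |x j| - ∑ j ∈ T, |y j| ≤ ∑ j ∈ T, |y j - x j| := by
    rw [← sum_sub_distrib]
    exact sum_le_sum fun j _ => abs_sub_comm (y j) (x j) ▸ abs_sub_abs_le_abs_sub _ _
  linarith

theorem neg_mul_sum_abs_le_sum_mul {ι : Type*} [Fintype ι] {g x : ι → ℝ} {M : ℝ}
    (hg : ∀ j, |g j| ≤ M) : -(M * ∑ j, |x j|) ≤ ∑ j, g j * x j := by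
  rw [mul_sum, ← sum_neg_distrib]
  refine sum_le_sum fun j _ => neg_le_of_abs_le ?_
  rw [abs_mul]
  exact mul_le_mul_of_nonneg_right (hg j) (abs_nonneg _)

theorem cone_condition_general {p : ℕ}
    (f : EuclideanSpace ℝ (Fin p) → ℝ) (g βstar βhat : EuclideanSpace ℝ (Fin p))
    (hconv : ConvexOn ℝ Set.univ f) (hgrad : HasGradientAt f g βstar)
    (lam c : ℝ) (hlam : 0 < lam) (hc : 1 < c)
    (T : Finset (Fin p)) (hsupp : ∀ j ∉ T, βstar j = 0)
    (hmin : ∀ β : EuclideanSpace ℝ (Fin p),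
      f βhat + lam * ∑ j, |βhat j| ≤ f β + lam * ∑ j, |β j|)
    (hlam_ge : ∀ j, c * |g j| ≤ lam) :
    ∑ j ∈ Tᶜ, |βhat j - βstar j| ≤ (c + 1) / (c - 1) * ∑ j ∈ T, |βhat j - βstar j| := by
  set A := ∑ j ∈ T, |βhat j - βstar j|
  set B := ∑ j ∈ Tᶜ, |βhat j - βstar j|
  have hupper : f βhat - f βstar ≤ lam * (A - B) := by
    have hl1 := sum_abs_sub_sum_abs_le_of_support_subset (y := βhat) hsupp
    have := mul_le_mul_of_nonneg_left hl1 hlam.le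
    linarith [hmin βstar]
  have hlower : -(lam / c * (A + B)) ≤ f βhat - f βstar := by
    have hg : ∀ j, |g j| ≤ lam / c := fun j => by
      rw [le_div_iff₀ (by linarith)]; linarith [hlam_ge j]
    have := hconv.inner_sub_le_of_hasGradientAt trivial trivial hgrad (y := βhat)
    rw [show A + B = ∑ j, |(βhat - βstar) j| from sum_add_sum_compl T _]
    refine (neg_mul_sum_abs_le_sum_mul hg).trans (le_of_eq_of_le ?_ this)
    simp [PiLp.inner_apply, mul_comm]
  have hscaled : lam / c * -(A + B) ≤ lam / c * (c * (A - B)) :=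
    calc _ = -(lam / c * (A + B)) := by ring
      _ ≤ lam * (A - B) := hlower.trans hupper
      _ = _ := by field_simp
  have key := le_of_mul_le_mul_left hscaled (by positivity)
  rw [div_mul_eq_mul_div, le_div_iff₀ (by linarith)]
  linarith

theorem cone_condition {p : ℕ} (hp : 0 < p)
    (f : EuclideanSpace ℝ (Fin p) → ℝ) (g βstar βhat : EuclideanSpace ℝ (Fin p))
    (hconv : ConvexOn ℝ Set.univ f) (hgrad : HasGradientAt f g βstar)
    (lam c : ℝ) (hlam : 0 < lam) (hc : 1 < c)
    (T : Finset (Fin p)) (hsupp : ∀ j ∉ T, βstar j = 0)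
    (hmin : ∀ β : EuclideanSpace ℝ (Fin p),
      f βhat + lam * ∑ j, |βhat j| ≤ f β + lam * ∑ j, |β j|)
    (hlam_ge : ∀ j, c * |g j| ≤ lam) :
    ∑ j ∈ Tᶜ, |βhat j - βstar j| ≤ (c + 1) / (c - 1) * ∑ j ∈ T, |βhat j - βstar j| :=
  cone_condition_general f g βstar βhat hconv hgrad lam c hlam hc T hsupp hmin hlam_ge
end

section
/- Let x₁,…,xₙ ∈ ℝᵖ with sup_{i,j} |x_{ij}| ≤ R, let y₁,…,yₙ ≥ 0, and define f̃(t) = (1/n)Σᵢ (yᵢ e^{−xᵢ^T(β+tv)/2} + e^{xᵢ^T(β+tv)/2}) for fixed β, v ∈ ℝᵖ. Then for all t ∈ ℝ, |f̃'''(t)| ≤ (R/2)·‖v‖₁·f̃''(t). -/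
/-
Writing `u(s) = xᵢᵀ(β + s v) = aᵢ + s bᵢ` with `bᵢ = xᵢᵀ v`, the `k`-th derivative of the
`i`-th summand is `(-bᵢ/2)ᵏ yᵢ e^{-u/2} + (bᵢ/2)ᵏ e^{u/2}`. Since both exponential terms are
nonnegative, the third derivative of each summand is at most `|bᵢ|/2` times the second in absolute
value, and `|bᵢ| ≤ R ‖v‖₁` by Hölder's inequality.
-/

open Finset Real

theorem iteratedDeriv_eq_of_hasDerivAt_succ {𝕜 E : Type*} [NontriviallyNormedField 𝕜]
    [NormedAddCommGroup E] [NormedSpace 𝕜 E] {F : ℕ → 𝕜 → E}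
    (hF : ∀ k s, HasDerivAt (F k) (F (k + 1) s) s) (k : ℕ) :
    iteratedDeriv k (F 0) = F k := by
  induction k with
  | zero => exact iteratedDeriv_zero
  | succ k ih =>
    rw [iteratedDeriv_succ, ih]
    exact funext fun s => (hF k s).deriv

theorem abs_sum_mul_le_mul_sum_abs {ι : Type*} (s : Finset ι) {x : ι → ℝ} {R : ℝ}
    (hx : ∀ j, |x j| ≤ R) (v : ι → ℝ) :
    |∑ j ∈ s, x j * v j| ≤ R * ∑ j ∈ s, |v j| := by
  calc |∑ j ∈ s, x j * v j| ≤ ∑ j ∈ s, |x j| * |v j| := by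
        simpa only [abs_mul] using abs_sum_le_sum_abs (fun j => x j * v j) s
    _ ≤ ∑ j ∈ s, R * |v j| :=
        sum_le_sum fun j _ => mul_le_mul_of_nonneg_right (hx j) (abs_nonneg _)
    _ = R * ∑ j ∈ s, |v j| := (mul_sum _ _ _).symm

noncomputable def expPairDeriv (y a b : ℝ) (k : ℕ) (s : ℝ) : ℝ :=
  (-b / 2) ^ k * (y * exp (-(a + s * b) / 2)) + (b / 2) ^ k * exp ((a + s * b) / 2)

theorem hasDerivAt_expPairDeriv (y a b : ℝ) (k : ℕ) (s : ℝ) :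
    HasDerivAt (expPairDeriv y a b k) (expPairDeriv y a b (k + 1) s) s := by
  have hu : HasDerivAt (fun s : ℝ => a + s * b) b s := by
    simpa using ((hasDerivAt_id s).mul_const b).const_add a
  have hneg := ((hu.fun_neg.div_const 2).exp.const_mul y).const_mul ((-b / 2) ^ k)
  have hpos := ((hu.div_const 2).exp).const_mul ((b / 2) ^ k)
  exact (hneg.fun_add hpos).congr_deriv (by simp only [expPairDeriv]; ring)

theorem expPairDeriv_two_nonneg {y : ℝ} (a b : ℝ) (hy : 0 ≤ y) (s : ℝ) :
    0 ≤ expPairDeriv y a b 2 s := by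
  unfold expPairDeriv; positivity

theorem abs_expPairDeriv_three_le {y : ℝ} (a b : ℝ) (hy : 0 ≤ y) (s : ℝ) :
    |expPairDeriv y a b 3 s| ≤ |b| / 2 * expPairDeriv y a b 2 s := by
  have hneg : 0 ≤ y * exp (-(a + s * b) / 2) := by positivity
  have hpos : 0 ≤ exp ((a + s * b) / 2) := by positivity
  calc |expPairDeriv y a b 3 s|
      ≤ |(-b / 2) ^ 3 * (y * exp (-(a + s * b) / 2))| + |(b / 2) ^ 3 * exp ((a + s * b) / 2)| :=
        abs_add_le _ _
    _ = |b| / 2 * expPairDeriv y a b 2 s := by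
        have hcube (c : ℝ) : |c| ^ 3 = |c| * c ^ 2 := by rw [pow_succ', sq_abs]
        rw [abs_mul ((-b / 2) ^ 3), abs_mul ((b / 2) ^ 3), abs_of_nonneg hneg,
          abs_of_nonneg hpos, abs_pow, abs_pow, hcube, hcube, expPairDeriv]
        simp only [abs_div, abs_neg, abs_two]
        ring

theorem self_concordance_type_bound_general {n p : ℕ} (R : ℝ)
    (x : Fin n → Fin p → ℝ) (hx : ∀ i j, |x i j| ≤ R)
    (y : Fin n → ℝ) (hy : ∀ i, 0 ≤ y i) (β v : Fin p → ℝ) (t : ℝ) :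
    |iteratedDeriv 3
        (fun s : ℝ =>
          (1 / (n : ℝ)) * ∑ i, (y i * Real.exp (-(∑ j, x i j * (β j + s * v j)) / 2) +
            Real.exp ((∑ j, x i j * (β j + s * v j)) / 2))) t| ≤
      (R / 2) * (∑ j, |v j|) *
        iteratedDeriv 2
          (fun s : ℝ =>
            (1 / (n : ℝ)) * ∑ i, (y i * Real.exp (-(∑ j, x i j * (β j + s * v j)) / 2) +
              Real.exp ((∑ j, x i j * (β j + s * v j)) / 2))) t := by
  set a : Fin n → ℝ := fun i => ∑ j, x i j * β j
  set b : Fin n → ℝ := fun i => ∑ j, x i j * v j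
  let F (k : ℕ) (s : ℝ) : ℝ := (1 / (n : ℝ)) * ∑ i, expPairDeriv (y i) (a i) (b i) k s
  have hF0 : (fun s : ℝ => (1 / (n : ℝ)) *
      ∑ i, (y i * exp (-(∑ j, x i j * (β j + s * v j)) / 2) +
        exp ((∑ j, x i j * (β j + s * v j)) / 2))) = F 0 := by
    ext s
    have hu (i : Fin n) : ∑ j, x i j * (β j + s * v j) = a i + s * b i := by
      simp only [a, b, mul_sum, ← sum_add_distrib]; exact sum_congr rfl fun j _ => by ring
    simp only [F, expPairDeriv, hu, pow_zero, one_mul]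
  have hF : ∀ k s, HasDerivAt (F k) (F (k + 1) s) s := fun k s =>
    (HasDerivAt.fun_sum fun i _ => hasDerivAt_expPairDeriv (y i) (a i) (b i) k s).const_mul _
  have hb (i : Fin n) : |b i| / 2 ≤ R / 2 * ∑ j, |v j| := by
    linarith [abs_sum_mul_le_mul_sum_abs univ (hx i) v]
  rw [hF0, iteratedDeriv_eq_of_hasDerivAt_succ hF, iteratedDeriv_eq_of_hasDerivAt_succ hF]
  calc |F 3 t| ≤ 1 / n * ∑ i, |b i| / 2 * expPairDeriv (y i) (a i) (b i) 2 t := by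
        rw [abs_mul, abs_of_nonneg (by positivity)]
        gcongr
        exact (abs_sum_le_sum_abs _ _).trans
          (sum_le_sum fun i _ => abs_expPairDeriv_three_le _ _ (hy i) t)
    _ ≤ 1 / n * ∑ i, R / 2 * (∑ j, |v j|) * expPairDeriv (y i) (a i) (b i) 2 t := by
        gcongr with i
        exacts [expPairDeriv_two_nonneg _ _ (hy i) t, hb i]
    _ = R / 2 * (∑ j, |v j|) * F 2 t := by simp only [F, ← mul_sum]; ring

theorem self_concordance_type_bound {n p : ℕ} (hn : 0 < n) (R : ℝ) (hR : 0 < R)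
    (x : Fin n → Fin p → ℝ) (hx : ∀ i j, |x i j| ≤ R)
    (y : Fin n → ℝ) (hy : ∀ i, 0 ≤ y i) (β v : Fin p → ℝ) (t : ℝ) :
    |iteratedDeriv 3
        (fun s : ℝ =>
          (1 / (n : ℝ)) * ∑ i, (y i * Real.exp (-(∑ j, x i j * (β j + s * v j)) / 2) +
            Real.exp ((∑ j, x i j * (β j + s * v j)) / 2))) t| ≤
      (R / 2) * (∑ j, |v j|) *
        iteratedDeriv 2
          (fun s : ℝ =>
            (1 / (n : ℝ)) * ∑ i, (y i * Real.exp (-(∑ j, x i j * (β j + s * v j)) / 2) +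
              Real.exp ((∑ j, x i j * (β j + s * v j)) / 2))) t :=
  self_concordance_type_bound_general R x hx y hy β v t
end
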